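/- arXiv:2202.10831 — 2 statements merged into one kernel-verified Lean document; each statement's English description precedes it below -/
import Mathlib

section
/- Let S be a finite set of points in the plane in general position (no three collinear) with |S| ≥ 2, and let p, q be two distinct points of S. Then there exists a plane (crossing-free) straight-line spanning path on S whose two endpoints are p and q. -/
open scoped Classical

noncomputable section

abbrev Pt : Type := ℝ × ℝ

/-- default point -/
def pd : Pt := (0, 0)

/-- No three distinct points of `S` are collinear. -/
def GenPos (S : Finset Pt) : Prop :=
  ∀ p ∈ S, ∀ q ∈ S, ∀ r ∈ S, p ≠ q → p ≠ r → q ≠ r →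
    ¬ Collinear ℝ ({p, q, r} : Set Pt)

/-- The (ordered) edges of a path given as a list of vertices. -/
def pathEdges (l : List Pt) : List (Pt × Pt) := l.zip l.tail

/-- The (ordered) edges of a cycle given as a list of vertices. -/
def cycleEdges (l : List Pt) : List (Pt × Pt) := l.zip (l.rotate 1)

/-- A family of straight-line segments is pairwise non-crossing:
the open segments of any two distinct members are disjoint. -/
def NonCrossing (E : List (Pt × Pt)) : Prop :=
  E.Pairwise fun e f => openSegment ℝ e.1 e.2 ∩ openSegment ℝ f.1 f.2 = ∅

/-- `l` is a plane (crossing-free) straight-line spanning path of `S`. -/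
def IsPlanePath (S : Finset Pt) (l : List Pt) : Prop :=
  l.Nodup ∧ l.toFinset = S ∧ NonCrossing (pathEdges l)

/-- `l` is a plane straight-line spanning cycle of `S`. -/
def IsPlaneCycle (S : Finset Pt) (l : List Pt) : Prop :=
  3 ≤ l.length ∧ l.Nodup ∧ l.toFinset = S ∧ NonCrossing (cycleEdges l)

/-- The set of edges of a path, as unordered pairs. -/
def edgeSet (l : List Pt) : Finset (Sym2 Pt) :=
  ((pathEdges l).map fun e => s(e.1, e.2)).toFinset

/-- The set of edges of a cycle, as unordered pairs. -/
def cycleEdgeSet (l : List Pt) : Finset (Sym2 Pt) :=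
  ((cycleEdges l).map fun e => s(e.1, e.2)).toFinset

/-- No segment joining two points of `S` crosses any edge of the cycle `l`. -/
def UncrossedCycle (S : Finset Pt) (l : List Pt) : Prop :=
  ∀ a ∈ S, ∀ b ∈ S, a ≠ b → ∀ e ∈ cycleEdges l, s(a, b) ≠ s(e.1, e.2) →
    openSegment ℝ a b ∩ openSegment ℝ e.1 e.2 = ∅

/-- Two plane spanning paths of `S` differ by a single flip. -/
def FlipAdj (S : Finset Pt) (P Q : List Pt) : Prop :=
  IsPlanePath S P ∧ IsPlanePath S Q ∧
    ∃ e f, e ≠ f ∧ e ∈ edgeSet P ∧ f ∈ edgeSet Q ∧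
      (edgeSet P).erase e = (edgeSet Q).erase f

/-- There is a sequence of `k` flips from `P` to (a representative of) `Q`, all of whose
members are plane spanning paths of `S` satisfying the additional property `A`. -/
def FlipSeq (S : Finset Pt) (A : List Pt → Prop) (k : ℕ) (P Q : List Pt) : Prop :=
  ∃ f : ℕ → List Pt, f 0 = P ∧ edgeSet (f k) = edgeSet Q ∧
    (∀ i ≤ k, IsPlanePath S (f i) ∧ A (f i)) ∧
    ∀ i < k, FlipAdj S (f i) (f (i + 1))

/-- The flip graph on the plane spanning paths of `S` satisfying `A` is connected. -/
def FlipConnected (S : Finset Pt) (A : List Pt → Prop) : Prop :=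
  ∀ P Q : List Pt, IsPlanePath S P → A P → IsPlanePath S Q → A Q →
    ∃ k, FlipSeq S A k P Q

/-- `uv` is an edge of the boundary of the convex hull of `S`. -/
def HullEdge (S : Finset Pt) (u v : Pt) : Prop :=
  u ∈ S ∧ v ∈ S ∧ u ≠ v ∧ segment ℝ u v ⊆ frontier (convexHull ℝ (S : Set Pt))

/-- `p` is an extreme point (a vertex of the convex hull) of `S`. -/
def ExtremePt (S : Finset Pt) (p : Pt) : Prop :=
  p ∈ S ∧ p ∉ convexHull ℝ ((S.erase p : Finset Pt) : Set Pt)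

/-- `p` is a point of `S` lying strictly in the interior of the convex hull of `S`. -/
def InteriorPt (S : Finset Pt) (p : Pt) : Prop :=
  p ∈ S ∧ p ∈ interior (convexHull ℝ (S : Set Pt))

/-- Twice the signed area of the triangle `a b c` (orientation test). -/
def sign3 (a b c : Pt) : ℝ :=
  (b.1 - a.1) * (c.2 - a.2) - (b.2 - a.2) * (c.1 - a.1)

/-! ### Auxiliary lemmas -/

lemma sign3_combo (w z u v : Pt) (a b : ℝ) (hab : a + b = 1) :
    sign3 w z (a • u + b • v) = a * sign3 w z u + b * sign3 w z v := by
  simp only [sign3, Prod.smul_fst, Prod.smul_snd, Prod.fst_add, Prod.snd_add, smul_eq_mul]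
  linear_combination (z.1 * w.2 - w.1 * z.2) * hab

lemma sign3_self₁ (w z : Pt) : sign3 w z w = 0 := by simp only [sign3]; ring
lemma sign3_self₂ (w z : Pt) : sign3 w z z = 0 := by simp only [sign3]; ring
lemma sign3_swap (w z x : Pt) : sign3 z w x = - sign3 w z x := by simp only [sign3]; ring

lemma mem_openSegment' {u v x : Pt} (h : x ∈ openSegment ℝ u v) :
    ∃ a b : ℝ, 0 < a ∧ 0 < b ∧ a + b = 1 ∧ a • u + b • v = x := h

lemma sign3_openSegment_pos {w z u v : Pt} (hu : 0 ≤ sign3 w z u) (hv : 0 ≤ sign3 w z v)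
    (h : 0 < sign3 w z u ∨ 0 < sign3 w z v) {x : Pt} (hx : x ∈ openSegment ℝ u v) :
    0 < sign3 w z x := by
  obtain ⟨a, b, ha, hb, hab, rfl⟩ := mem_openSegment' hx
  rw [sign3_combo w z u v a b hab]
  rcases h with h | h
  · nlinarith
  · nlinarith

lemma sign3_openSegment_neg {w z u v : Pt} (hu : sign3 w z u ≤ 0) (hv : sign3 w z v ≤ 0)
    (h : sign3 w z u < 0 ∨ sign3 w z v < 0) {x : Pt} (hx : x ∈ openSegment ℝ u v) :
    sign3 w z x < 0 := by
  obtain ⟨a, b, ha, hb, hab, rfl⟩ := mem_openSegment' hx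
  rw [sign3_combo w z u v a b hab]
  rcases h with h | h
  · nlinarith
  · nlinarith

lemma sign3_openSegment_zero {w z x : Pt} (hx : x ∈ openSegment ℝ w z) :
    sign3 w z x = 0 := by
  obtain ⟨a, b, ha, hb, hab, rfl⟩ := mem_openSegment' hx
  rw [sign3_combo w z w z a b hab, sign3_self₁, sign3_self₂]; ring

lemma disj_of_pos {w z u v : Pt} (hu : 0 ≤ sign3 w z u) (hv : 0 ≤ sign3 w z v)
    (h : 0 < sign3 w z u ∨ 0 < sign3 w z v) :
    openSegment ℝ u v ∩ openSegment ℝ w z = ∅ := by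
  ext x
  simp only [Set.mem_inter_iff, Set.mem_empty_iff_false, iff_false, not_and]
  intro h1 h2
  have := sign3_openSegment_pos hu hv h h1
  rw [sign3_openSegment_zero h2] at this
  exact lt_irrefl 0 this

lemma disj_of_neg {w z u v : Pt} (hu : sign3 w z u ≤ 0) (hv : sign3 w z v ≤ 0)
    (h : sign3 w z u < 0 ∨ sign3 w z v < 0) :
    openSegment ℝ u v ∩ openSegment ℝ w z = ∅ := by
  have := disj_of_pos (w := z) (z := w) (u := u) (v := v)
    (by rw [sign3_swap]; linarith) (by rw [sign3_swap]; linarith)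
    (by rcases h with h | h; · left; rw [sign3_swap]; linarith
        · right; rw [sign3_swap]; linarith)
  rwa [openSegment_symm ℝ z w] at this

lemma disj_opp {w z u v x y : Pt} (hu : 0 ≤ sign3 w z u) (hv : 0 ≤ sign3 w z v)
    (h1 : 0 < sign3 w z u ∨ 0 < sign3 w z v)
    (hx : sign3 w z x ≤ 0) (hy : sign3 w z y ≤ 0)
    (h2 : sign3 w z x < 0 ∨ sign3 w z y < 0) :
    openSegment ℝ u v ∩ openSegment ℝ x y = ∅ := by
  ext c
  simp only [Set.mem_inter_iff, Set.mem_empty_iff_false, iff_false, not_and]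
  intro hc1 hc2
  have hp := sign3_openSegment_pos hu hv h1 hc1
  have hn := sign3_openSegment_neg hx hy h2 hc2
  linarith

lemma collinear_of_sign3 {a b c : Pt} (h : sign3 a b c = 0) :
    Collinear ℝ ({a, b, c} : Set Pt) := by
  by_cases hab : a = b
  · subst hab
    have : ({a, a, c} : Set Pt) = {a, c} := by simp
    rw [this]
    exact collinear_pair ℝ a c
  rw [collinear_iff_of_mem (Set.mem_insert a {b, c})]
  refine ⟨b - a, ?_⟩
  intro p hp
  rcases hp with rfl | rfl | rfl
  · exact ⟨0, by simp⟩
  · exact ⟨1, by simp⟩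
  · simp only [sign3] at h
    by_cases h1 : b.1 - a.1 ≠ 0
    · refine ⟨(p.1 - a.1) / (b.1 - a.1), ?_⟩
      have h2 : p.2 - a.2 = (p.1 - a.1) / (b.1 - a.1) * (b.2 - a.2) := by
        field_simp
        nlinarith [h]
      have h4 : p.1 - a.1 = (p.1 - a.1) / (b.1 - a.1) * (b.1 - a.1) := by
        field_simp
      apply Prod.ext <;>
        simp only [Prod.smul_fst, Prod.smul_snd, Prod.fst_add, Prod.snd_add,
          Prod.fst_sub, Prod.snd_sub, smul_eq_mul, vadd_eq_add] <;> linarith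
    · push_neg at h1
      have h2 : b.2 - a.2 ≠ 0 := by
        intro h2
        exact hab (Prod.ext (by linarith) (by linarith))
      refine ⟨(p.2 - a.2) / (b.2 - a.2), ?_⟩
      have h3 : p.1 - a.1 = 0 := by
        have h0 : (b.1 - a.1) * (p.2 - a.2) = 0 := mul_eq_zero_of_left h1 _
        have : (b.2 - a.2) * (p.1 - a.1) = 0 := by linarith
        rcases mul_eq_zero.mp this with h' | h'
        · exact absurd h' h2
        · exact h'
      have h4 : p.2 - a.2 = (p.2 - a.2) / (b.2 - a.2) * (b.2 - a.2) := by field_simp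
      apply Prod.ext <;>
        simp only [Prod.smul_fst, Prod.smul_snd, Prod.fst_add, Prod.snd_add,
          Prod.fst_sub, Prod.snd_sub, smul_eq_mul, vadd_eq_add] <;>
        [skip; linarith]
      have h5 : (p.2 - a.2) / (b.2 - a.2) * (b.1 - a.1) = 0 :=
        mul_eq_zero_of_right _ h1
      linarith

lemma gp_sign3 {S : Finset Pt} (hgp : GenPos S) {a b c : Pt} (ha : a ∈ S) (hb : b ∈ S)
    (hc : c ∈ S) (hab : a ≠ b) (hac : a ≠ c) (hbc : b ≠ c) : sign3 a b c ≠ 0 :=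
  fun h => hgp a ha b hb c hc hab hac hbc (collinear_of_sign3 h)

lemma genpos_mono {S T : Finset Pt} (hgp : GenPos S) (hsub : T ⊆ S) : GenPos T :=
  fun p hp q hq r hr h1 h2 h3 =>
    hgp p (hsub hp) q (hsub hq) r (hsub hr) h1 h2 h3

lemma convex_aff_le (c1 c2 c0 : ℝ) : Convex ℝ {x : Pt | c1 * x.1 + c2 * x.2 + c0 ≤ 0} := by
  intro x hx y hy a b ha hb hab
  simp only [Set.mem_setOf_eq, Prod.smul_fst, Prod.smul_snd, Prod.fst_add, Prod.snd_add,
    smul_eq_mul] at *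
  have hc : a * c0 + b * c0 = c0 := by linear_combination c0 * hab
  nlinarith [mul_le_mul_of_nonneg_left hx ha, mul_le_mul_of_nonneg_left hy hb]

lemma convex_aff_lt (c1 c2 c0 : ℝ) : Convex ℝ {x : Pt | c1 * x.1 + c2 * x.2 + c0 < 0} := by
  intro x hx y hy a b ha hb hab
  simp only [Set.mem_setOf_eq, Prod.smul_fst, Prod.smul_snd, Prod.fst_add, Prod.snd_add,
    smul_eq_mul] at *
  rcases eq_or_lt_of_le ha with rfl | ha'
  · have hb1 : b = 1 := by linarith
    subst hb1; simpa using hy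
  · have hc : a * c0 + b * c0 = c0 := by linear_combination c0 * hab
    nlinarith [mul_lt_mul_of_pos_left hx ha', mul_le_mul_of_nonneg_left (le_of_lt hy) hb]

/-- the auxiliary "along the line" linear functional -/
def kappa (p q x : Pt) : ℝ := (x.1 - p.1) * (q.1 - p.1) + (x.2 - p.2) * (q.2 - p.2)

lemma d2_pos {p q : Pt} (hpq : p ≠ q) : 0 < kappa p q q := by
  simp only [kappa]
  by_contra hc
  push_neg at hc
  have h1 : q.1 = p.1 := by nlinarith
  have h2 : q.2 = p.2 := by nlinarith
  exact hpq (Prod.ext h1.symm h2.symm)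

lemma lin_decomp (f : Pt →L[ℝ] ℝ) (x : Pt) : f x = x.1 * f (1,0) + x.2 * f (0,1) := by
  have hx : x = x.1 • ((1:ℝ),(0:ℝ)) + x.2 • ((0:ℝ),(1:ℝ)) := by
    apply Prod.ext <;> simp
  rw [show f x = f (x.1 • ((1:ℝ),(0:ℝ)) + x.2 • ((0:ℝ),(1:ℝ))) from by rw [← hx]]
  rw [map_add, map_smul, map_smul, smul_eq_mul, smul_eq_mul]

lemma tangent {S : Finset Pt} (hgp : GenPos S) {p : Pt} (hp : p ∈ S)
    (hext : p ∉ convexHull ℝ ((S.erase p : Finset Pt) : Set Pt))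
    (hne : (S.erase p).Nonempty) :
    (∃ a ∈ S.erase p, ∀ s ∈ S, s ≠ p → s ≠ a → 0 < sign3 p a s) ∧
    (∃ a ∈ S.erase p, ∀ s ∈ S, s ≠ p → s ≠ a → sign3 p a s < 0) := by
  obtain ⟨f, u, hfu, hall⟩ := _root_.geometric_hahn_banach_point_closed
    (convex_convexHull ℝ _) ((S.erase p).finite_toSet.isCompact_convexHull (𝕜 := ℝ)).isClosed hext
  set α := f (1,0) with hα
  set β := f (0,1) with hβ
  set F : Pt → ℝ := fun x => α * (x.1 - p.1) + β * (x.2 - p.2) with hF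
  set g : Pt → ℝ := fun x => -β * (x.1 - p.1) + α * (x.2 - p.2) with hg
  have hFf : ∀ x : Pt, F x = f x - f p := by
    intro x
    rw [hF]; simp only
    rw [lin_decomp f x, lin_decomp f p]; ring
  have hFpos : ∀ s ∈ S.erase p, 0 < F s := by
    intro s hs
    have : u < f s := hall s (subset_convexHull ℝ _ hs)
    rw [hFf]; linarith
  have hab2 : 0 < α^2 + β^2 := by
    obtain ⟨s0, hs0⟩ := hne
    have h0 := hFpos s0 hs0
    by_contra hc
    push_neg at hc
    have hα0 : α = 0 := by nlinarith
    have hβ0 : β = 0 := by nlinarith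
    rw [hF] at h0; simp only [hα0, hβ0] at h0; linarith
  have key : ∀ (a : Pt), a ∈ S.erase p → ∀ s ∈ S.erase p, s ≠ a →
      g a * F s ≤ g s * F a → 0 < sign3 p a s := by
    intro a ha s hs hsa hle
    have hFa := hFpos a ha
    have hFs := hFpos s hs
    have hid : F a * g s - g a * F s = (α^2 + β^2) * sign3 p a s := by
      rw [hF, hg]; simp only [sign3]; ring
    have hne0 : sign3 p a s ≠ 0 := by
      refine gp_sign3 hgp hp (Finset.mem_of_mem_erase ha) (Finset.mem_of_mem_erase hs)
        ?_ ?_ hsa.symm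
      · exact fun h => (Finset.mem_erase.mp ha).1 h.symm
      · exact fun h => (Finset.mem_erase.mp hs).1 h.symm
    rcases lt_or_gt_of_ne hne0 with h | h
    · nlinarith
    · exact h
  constructor
  · obtain ⟨a, ha, hmin⟩ := (S.erase p).exists_min_image (fun s => g s / F s) hne
    refine ⟨a, ha, ?_⟩
    intro s hsS hsp hsa
    have hs : s ∈ S.erase p := Finset.mem_erase.mpr ⟨hsp, hsS⟩
    refine key a ha s hs hsa ?_
    have := hmin s hs
    rw [div_le_div_iff₀ (hFpos a ha) (hFpos s hs)] at this
    linarith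
  · obtain ⟨a, ha, hmax⟩ := (S.erase p).exists_max_image (fun s => g s / F s) hne
    refine ⟨a, ha, ?_⟩
    intro s hsS hsp hsa
    have hs : s ∈ S.erase p := Finset.mem_erase.mpr ⟨hsp, hsS⟩
    have hkey := key s hs a ha (Ne.symm hsa) ?_
    · have : sign3 p a s = - sign3 p s a * (1:ℝ) + 0 := by simp only [sign3]; ring
      rw [this]; simp only [mul_one, add_zero]; linarith
    · have := hmax s hs
      rw [div_le_div_iff₀ (hFpos s hs) (hFpos a ha)] at this
      linarith

lemma side_nonempty {S : Finset Pt} (hgp : GenPos S) {p q : Pt} (hp : p ∈ S) (hq : q ∈ S)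
    (hpq : p ≠ q) (hne : p ∈ convexHull ℝ ((S.erase p : Finset Pt) : Set Pt)) :
    ∃ s ∈ S, s ≠ p ∧ s ≠ q ∧ 0 < sign3 p q s := by
  by_contra hcon
  push_neg at hcon
  have hneg : ∀ s ∈ S, s ≠ p → s ≠ q → sign3 p q s < 0 := by
    intro s hs hsp hsq
    have h1 := hcon s hs hsp hsq
    have h2 := gp_sign3 hgp hp hq hs hpq (Ne.symm hsp) (Ne.symm hsq)
    exact lt_of_le_of_ne h1 h2
  set B0 := (S.erase p).erase q with hB0
  by_cases hB : B0 = ∅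
  · have hsub : S.erase p ⊆ {q} := by
      intro s hs
      by_contra hsq
      have : s ∈ B0 := Finset.mem_erase.mpr ⟨by simpa using hsq, hs⟩
      simp [hB] at this
    have : p ∈ convexHull ℝ (({q} : Finset Pt) : Set Pt) := by
      refine convexHull_mono ?_ hne
      exact_mod_cast hsub
    simp at this
    exact hpq this
  · have hBne : B0.Nonempty := Finset.nonempty_iff_ne_empty.mpr hB
    set e : Pt → ℝ := fun s => (-sign3 p q s) / (|kappa p q s| + 1) with he
    set ε := (B0.image e).min' (hBne.image e) with hε
    have hεmem := Finset.min'_mem (B0.image e) (hBne.image e)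
    have hmemS : ∀ s ∈ B0, s ∈ S ∧ s ≠ p ∧ s ≠ q := by
      intro s hs
      have h1 := Finset.mem_erase.mp hs
      have h2 := Finset.mem_erase.mp h1.2
      exact ⟨h2.2, h2.1, h1.1⟩
    have hεpos : 0 < ε := by
      obtain ⟨s0, hs0, hes0⟩ := Finset.mem_image.mp hεmem
      obtain ⟨hS, hsp, hsq⟩ := hmemS s0 hs0
      rw [hε, ← hes0, he]
      have hn := hneg s0 hS hsp hsq
      have habs : (0:ℝ) < |kappa p q s0| + 1 := by positivity
      exact div_pos (by linarith) habs
    have hεle : ∀ s ∈ B0, ε ≤ e s := fun s hs =>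
      Finset.min'_le _ _ (Finset.mem_image_of_mem e hs)
    set C1 : ℝ := -(q.2 - p.2) - ε * (q.1 - p.1) with hC1
    set C2 : ℝ := (q.1 - p.1) - ε * (q.2 - p.2) with hC2
    set C0 : ℝ := -(q.1 - p.1) * p.2 + (q.2 - p.2) * p.1 +
      ε * ((q.1 - p.1) * p.1 + (q.2 - p.2) * p.2) with hC0
    have hFC : ∀ x : Pt, C1 * x.1 + C2 * x.2 + C0 = sign3 p q x - ε * kappa p q x := by
      intro x
      rw [hC1, hC2, hC0]; simp only [sign3, kappa]; ring
    have hgen : (↑(S.erase p) : Set Pt) ⊆ {x : Pt | C1 * x.1 + C2 * x.2 + C0 < 0} := by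
      intro s hs
      have hs' : s ∈ S.erase p := by exact_mod_cast hs
      simp only [Set.mem_setOf_eq]
      rw [hFC]
      by_cases hsq : s = q
      · rw [hsq]
        have h1 : sign3 p q q = 0 := by simp only [sign3]; ring
        have h2 := d2_pos hpq
        rw [h1]
        simp only [kappa] at h2 ⊢
        nlinarith
      · have hsB : s ∈ B0 := Finset.mem_erase.mpr ⟨hsq, hs'⟩
        obtain ⟨hS, hsp, _⟩ := hmemS s hsB
        have hγ := hneg s hS hsp hsq
        have hA1 : (0:ℝ) < |kappa p q s| + 1 := by positivity
        have h1 : ε * (|kappa p q s| + 1) ≤ -sign3 p q s := by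
          have := hεle s hsB
          rw [he] at this
          exact (le_div_iff₀ hA1).mp this
        nlinarith [neg_abs_le (kappa p q s), hεpos]
    have hmem := convexHull_min hgen (convex_aff_lt C1 C2 C0) hne
    simp only [Set.mem_setOf_eq] at hmem
    rw [hFC] at hmem
    have h1 : sign3 p q p = 0 := by simp only [sign3]; ring
    have h2 : kappa p q p = 0 := by simp only [kappa]; ring
    rw [h1, h2] at hmem
    simp at hmem

lemma tau_pos {S : Finset Pt} (hgp : GenPos S) {p q : Pt} (hp : p ∈ S) (hq : q ∈ S)
    (hpq : p ≠ q)
    (hA : ∃ a ∈ S, a ≠ p ∧ a ≠ q ∧ 0 < sign3 p q a)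
    (htri : ∀ s ∈ S, s ≠ p → s ≠ q → sign3 p q s ≠ 0)
    (hqne : q ∈ convexHull ℝ ((S.erase q : Finset Pt) : Set Pt)) :
    ∃ a ∈ S, ∃ b ∈ S, 0 < sign3 p q a ∧ sign3 p q b < 0 ∧
      0 < sign3 p q a * kappa p q b - sign3 p q b * kappa p q a := by
  by_contra hcon
  push_neg at hcon
  obtain ⟨a0, ha0S, ha0p, ha0q, ha0⟩ := hA
  set A := S.filter (fun s => 0 < sign3 p q s) with hAdef
  have hAne : A.Nonempty := ⟨a0, Finset.mem_filter.mpr ⟨ha0S, ha0⟩⟩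
  obtain ⟨am, hamA, hmax⟩ := A.exists_max_image (fun s => kappa p q s / sign3 p q s) hAne
  obtain ⟨hamS, hγam⟩ := Finset.mem_filter.mp hamA
  set lam := kappa p q am / sign3 p q am with hlam
  set C1 : ℝ := (q.1 - p.1) + lam * (q.2 - p.2) with hC1
  set C2 : ℝ := (q.2 - p.2) - lam * (q.1 - p.1) with hC2
  set C0 : ℝ := -((q.1 - p.1) * p.1 + (q.2 - p.2) * p.2) -
    lam * (-(q.1 - p.1) * p.2 + (q.2 - p.2) * p.1) with hC0
  have hFC : ∀ x : Pt, C1 * x.1 + C2 * x.2 + C0 = kappa p q x - lam * sign3 p q x := by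
    intro x
    rw [hC1, hC2, hC0]; simp only [sign3, kappa]; ring
  have hgen : (↑(S.erase q) : Set Pt) ⊆ {x : Pt | C1 * x.1 + C2 * x.2 + C0 ≤ 0} := by
    intro s hs
    have hs' : s ∈ S.erase q := by exact_mod_cast hs
    obtain ⟨hsq, hsS⟩ := Finset.mem_erase.mp hs'
    simp only [Set.mem_setOf_eq]
    rw [hFC]
    by_cases hsp : s = p
    · rw [hsp]
      have h1 : sign3 p q p = 0 := by simp only [sign3]; ring
      have h2 : kappa p q p = 0 := by simp only [kappa]; ring
      rw [h1, h2]; norm_num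
    · rcases lt_or_gt_of_ne (htri s hsS hsp hsq) with hγ | hγ
      · have hc := hcon am hamS s hsS hγam hγ
        have h1 : kappa p q s ≤ sign3 p q s * kappa p q am / sign3 p q am := by
          rw [le_div_iff₀ hγam]
          nlinarith
        have h2 : sign3 p q s * kappa p q am / sign3 p q am = lam * sign3 p q s := by
          rw [hlam]; field_simp <;> ring_nf
        rw [← h2]; linarith
      · have hsA : s ∈ A := Finset.mem_filter.mpr ⟨hsS, hγ⟩
        have := hmax s hsA
        rw [div_le_div_iff₀ hγ hγam] at this
        have h2 : lam * sign3 p q s = kappa p q am * sign3 p q s / sign3 p q am := by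
          rw [hlam]; field_simp <;> ring_nf
        rw [h2, sub_nonpos, le_div_iff₀ hγam]
        linarith
  have hmem := convexHull_min hgen (convex_aff_le C1 C2 C0) hqne
  simp only [Set.mem_setOf_eq] at hmem
  rw [hFC] at hmem
  have h1 : sign3 p q q = 0 := by simp only [sign3]; ring
  rw [h1] at hmem
  have := d2_pos hpq
  nlinarith

lemma hat_id (p q a b x : Pt) :
    sign3 ((kappa p q a, sign3 p q a) : Pt) ((kappa p q b, sign3 p q b) : Pt)
      ((kappa p q x, sign3 p q x) : Pt) = kappa p q q * sign3 a b x := by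
  simp only [sign3, kappa]; ring

lemma hull_edge {S : Finset Pt} (hgp : GenPos S) {p q : Pt} (hp : p ∈ S) (hq : q ∈ S)
    (hpq : p ≠ q)
    (hA : ∃ a ∈ S, a ≠ p ∧ a ≠ q ∧ 0 < sign3 p q a)
    (htri : ∀ s ∈ S, s ≠ p → s ≠ q → sign3 p q s ≠ 0)
    (hqne : q ∈ convexHull ℝ ((S.erase q : Finset Pt) : Set Pt)) :
    ∃ a ∈ S, ∃ b ∈ S, 0 < sign3 p q a ∧ sign3 p q b < 0 ∧
      ∀ s ∈ S, s ≠ a → s ≠ b → sign3 a b s < 0 := by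
  classical
  set γ : Pt → ℝ := fun x => sign3 p q x with hγdef
  set K : Pt → ℝ := fun x => kappa p q x with hKdef
  obtain ⟨a0, ha0S, b0, hb0S, ha0, hb0, hτ0⟩ := tau_pos hgp hp hq hpq hA htri hqne
  set A := S.filter (fun s => 0 < γ s) with hAdef
  set B := S.filter (fun s => γ s < 0) with hBdef
  set f : Pt × Pt → ℝ := fun e => (γ e.1 * K e.2 - γ e.2 * K e.1) / (γ e.1 - γ e.2) with hfdef
  have hABne : ((A ×ˢ B)).Nonempty :=
    ⟨(a0, b0), Finset.mem_product.mpr ⟨Finset.mem_filter.mpr ⟨ha0S, ha0⟩,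
      Finset.mem_filter.mpr ⟨hb0S, hb0⟩⟩⟩
  obtain ⟨⟨a, b⟩, habAB, hmax⟩ := (A ×ˢ B).exists_max_image f hABne
  obtain ⟨haA, hbB⟩ := Finset.mem_product.mp habAB
  obtain ⟨haS, hγa⟩ := Finset.mem_filter.mp haA
  obtain ⟨hbS, hγb⟩ := Finset.mem_filter.mp hbB
  have hτ00 : 0 < f (a0, b0) := by
    rw [hfdef]
    exact div_pos hτ0 (by simp only [hγdef]; linarith)
  have hτab : 0 < f (a, b) := lt_of_lt_of_le hτ00 (hmax (a0, b0)
    (Finset.mem_product.mpr ⟨Finset.mem_filter.mpr ⟨ha0S, ha0⟩,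
      Finset.mem_filter.mpr ⟨hb0S, hb0⟩⟩))
  have hd : 0 < γ a - γ b := by linarith
  have hN : 0 < γ a * K b - γ b * K a := by
    have : f (a, b) * (γ a - γ b) = γ a * K b - γ b * K a := by
      rw [hfdef]; field_simp
    nlinarith
  have hd2 := d2_pos hpq
  have hap : a ≠ p := fun h => by rw [h] at hγa; simp only [hγdef, sign3] at hγa; nlinarith [hγa]
  have haq : a ≠ q := fun h => by rw [h] at hγa; simp only [hγdef, sign3] at hγa; nlinarith [hγa]
  have hbp : b ≠ p := fun h => by rw [h] at hγb; simp only [hγdef, sign3] at hγb; nlinarith [hγb]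
  have hbq : b ≠ q := fun h => by rw [h] at hγb; simp only [hγdef, sign3] at hγb; nlinarith [hγb]
  have hab : a ≠ b := fun h => by rw [h] at hγa; linarith
  have hsideA : ∀ s ∈ S, 0 < γ s → s ≠ a → sign3 a b s < 0 := by
    intro s hsS hγs hsa
    have hsA : s ∈ A := Finset.mem_filter.mpr ⟨hsS, hγs⟩
    have hsb : s ≠ b := fun h => by rw [h] at hγs; linarith
    have hm := hmax (s, b) (Finset.mem_product.mpr ⟨hsA, hbB⟩)
    rw [hfdef, div_le_div_iff₀ (by simp only [hγdef] at *; linarith) hd] at hm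
    have hne0 : sign3 a b s ≠ 0 := gp_sign3 hgp haS hbS hsS hab hsa.symm hsb.symm
    have hidA : (γ s * K b - γ b * K s) * (γ a - γ b) -
        (γ a * K b - γ b * K a) * (γ s - γ b) = -γ b * (kappa p q q * sign3 a b s) := by
      simp only [hγdef, hKdef, sign3, kappa]; ring
    have h1 : -γ b * (kappa p q q * sign3 a b s) ≤ 0 := by linarith
    have h2 : kappa p q q * sign3 a b s ≤ 0 := by nlinarith
    rcases lt_or_gt_of_ne hne0 with h | h
    · exact h
    · exfalso; nlinarith
  have hsideB : ∀ s ∈ S, γ s < 0 → s ≠ b → sign3 a b s < 0 := by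
    intro s hsS hγs hsb
    have hsB : s ∈ B := Finset.mem_filter.mpr ⟨hsS, hγs⟩
    have hsa : s ≠ a := fun h => by rw [h] at hγs; linarith
    have hm := hmax (a, s) (Finset.mem_product.mpr ⟨haA, hsB⟩)
    rw [hfdef, div_le_div_iff₀ (by simp only [hγdef] at *; linarith) hd] at hm
    have hne0 : sign3 a b s ≠ 0 := gp_sign3 hgp haS hbS hsS hab hsa.symm hsb.symm
    have hidB : (γ a * K s - γ s * K a) * (γ a - γ b) -
        (γ a * K b - γ b * K a) * (γ a - γ s) = γ a * (kappa p q q * sign3 a b s) := by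
      simp only [hγdef, hKdef, sign3, kappa]; ring
    have h1 : γ a * (kappa p q q * sign3 a b s) ≤ 0 := by linarith
    have h2 : kappa p q q * sign3 a b s ≤ 0 := by nlinarith
    rcases lt_or_gt_of_ne hne0 with h | h
    · exact h
    · exfalso; nlinarith
  have hsidep : sign3 a b p < 0 := by
    have hid := hat_id p q a b p
    have h1 : kappa p q p = 0 := by simp only [kappa]; ring
    have h2 : sign3 p q p = 0 := by simp only [sign3]; ring
    have h3 : sign3 ((kappa p q a, sign3 p q a) : Pt) ((kappa p q b, sign3 p q b) : Pt)
        ((kappa p q p, sign3 p q p) : Pt) = -(γ a * K b - γ b * K a) := by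
      rw [h1, h2]
      simp only [sign3, hγdef, hKdef, kappa]
      ring
    rw [h3] at hid
    nlinarith
  have hsideq : sign3 a b q < 0 := by
    have hgen : (↑(S.erase q) : Set Pt) ⊆
        {x : Pt | -(b.2 - a.2) * x.1 + (b.1 - a.1) * x.2 +
          (-(b.1 - a.1) * a.2 + (b.2 - a.2) * a.1) ≤ 0} := by
      intro s hs
      have hs' : s ∈ S.erase q := by exact_mod_cast hs
      obtain ⟨hsq, hsS⟩ := Finset.mem_erase.mp hs'
      simp only [Set.mem_setOf_eq]
      have hform : ∀ x : Pt, -(b.2 - a.2) * x.1 + (b.1 - a.1) * x.2 +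
          (-(b.1 - a.1) * a.2 + (b.2 - a.2) * a.1) = sign3 a b x := by
        intro x; simp only [sign3]; ring
      rw [hform]
      by_cases hsa : s = a
      · rw [hsa, sign3_self₁]
      by_cases hsb : s = b
      · rw [hsb, sign3_self₂]
      by_cases hsp : s = p
      · rw [hsp]; linarith [hsidep]
      · rcases lt_or_gt_of_ne (htri s hsS hsp hsq) with h | h
        · linarith [hsideB s hsS h hsb]
        · linarith [hsideA s hsS h hsa]
    have hmem := convexHull_min hgen (convex_aff_le _ _ _) hqne
    simp only [Set.mem_setOf_eq] at hmem
    have hform : -(b.2 - a.2) * q.1 + (b.1 - a.1) * q.2 +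
        (-(b.1 - a.1) * a.2 + (b.2 - a.2) * a.1) = sign3 a b q := by
      simp only [sign3]; ring
    rw [hform] at hmem
    have hne0 : sign3 a b q ≠ 0 := gp_sign3 hgp haS hbS hq hab haq hbq
    exact lt_of_le_of_ne hmem hne0
  refine ⟨a, haS, b, hbS, hγa, hγb, ?_⟩
  intro s hsS hsa hsb
  by_cases hsp : s = p
  · rw [hsp]; exact hsidep
  by_cases hsq : s = q
  · rw [hsq]; exact hsideq
  rcases lt_or_gt_of_ne (htri s hsS hsp hsq) with h | h
  · exact hsideB s hsS h hsb
  · exact hsideA s hsS h hsa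

/- list lemmas -/

lemma pathEdges_nil : pathEdges [] = [] := rfl
lemma pathEdges_single (x : Pt) : pathEdges [x] = [] := rfl
lemma pathEdges_cons₂ (x y : Pt) (t : List Pt) :
    pathEdges (x :: y :: t) = (x, y) :: pathEdges (y :: t) := rfl

lemma pathEdges_decomp {l : List Pt} {e : Pt × Pt} (h : e ∈ pathEdges l) :
    ∃ l₁ l₂, l = l₁ ++ e.1 :: e.2 :: l₂ := by
  induction l with
  | nil => simp [pathEdges_nil] at h
  | cons x t ih =>
    match t with
    | [] => simp [pathEdges_single] at h
    | y :: t' =>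
      rw [pathEdges_cons₂] at h
      rcases List.mem_cons.mp h with h | h
      · exact ⟨[], t', by simp [h]⟩
      · obtain ⟨l₁, l₂, hl⟩ := ih h
        exact ⟨x :: l₁, l₂, by rw [List.cons_append, ← hl]⟩

lemma pathEdges_mem_fst {l : List Pt} {e : Pt × Pt} (h : e ∈ pathEdges l) : e.1 ∈ l := by
  obtain ⟨l₁, l₂, hl⟩ := pathEdges_decomp h
  rw [hl]; simp

lemma pathEdges_mem_snd {l : List Pt} {e : Pt × Pt} (h : e ∈ pathEdges l) : e.2 ∈ l := by
  obtain ⟨l₁, l₂, hl⟩ := pathEdges_decomp h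
  rw [hl]; simp

lemma pathEdges_ne {l : List Pt} (hnd : l.Nodup) {e : Pt × Pt} (h : e ∈ pathEdges l) :
    e.1 ≠ e.2 := by
  obtain ⟨l₁, l₂, hl⟩ := pathEdges_decomp h
  rw [hl] at hnd
  have h2 := List.Nodup.of_append_right hnd
  have h3 := (List.nodup_cons.mp h2).1
  intro he
  exact h3 (by rw [he]; exact List.mem_cons_self)

lemma pathEdges_append (l₁ l₂ : List Pt) (h₁ : l₁ ≠ []) (h₂ : l₂ ≠ []) :
    pathEdges (l₁ ++ l₂) =
      pathEdges l₁ ++ (l₁.getLast h₁, l₂.head h₂) :: pathEdges l₂ := by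
  induction l₁ with
  | nil => exact absurd rfl h₁
  | cons x t ih =>
    match t with
    | [] =>
      match l₂, h₂ with
      | y :: t₂, _ => simp [pathEdges_single, pathEdges_cons₂, pathEdges]
    | y :: t' =>
      have : (x :: y :: t') ++ l₂ = x :: ((y :: t') ++ l₂) := rfl
      rw [this]
      have h2 : (y :: t') ++ l₂ = y :: (t' ++ l₂) := rfl
      rw [h2, pathEdges_cons₂, ← h2, ih (by simp), pathEdges_cons₂]
      simp [List.getLast_cons]

lemma head?_decomp {l : List Pt} {a : Pt} (h : l.head? = some a) : ∃ l', l = a :: l' := by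
  cases l with
  | nil => simp at h
  | cons x t => simp at h; exact ⟨t, by rw [h]⟩

lemma getLast?_decomp {l : List Pt} {a : Pt} (h : l.getLast? = some a) :
    ∃ l', l = l' ++ [a] := by
  cases l with
  | nil => simp at h
  | cons x t =>
    have h2 : (x :: t) ≠ [] := by simp
    rw [List.getLast?_eq_getLast_of_ne_nil h2] at h
    simp only [Option.some_inj] at h
    exact ⟨(x :: t).dropLast, by rw [← h]; exact (List.dropLast_append_getLast h2).symm⟩

lemma path_exists_aux : ∀ n : ℕ, ∀ S : Finset Pt, S.card ≤ n → GenPos S → 2 ≤ S.card →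
    ∀ p q : Pt, p ∈ S → q ∈ S → p ≠ q →
    ∃ l : List Pt, IsPlanePath S l ∧ l.head? = some p ∧ l.getLast? = some q := by
  intro n
  induction n with
  | zero => intro S hle _ h2 _ _ _ _ _; omega
  | succ n ih =>
    intro S hle hgp hcard p q hp hq hpq
    by_cases h2 : S.card = 2
    · -- base case : S = {p, q}
      have hsub : ({p, q} : Finset Pt) ⊆ S := by
        intro s hs
        rcases Finset.mem_insert.mp hs with rfl | hs
        · exact hp
        · rw [Finset.mem_singleton.mp hs]; exact hq
      refine ⟨[p, q], ⟨?_, ?_, ?_⟩, rfl, by simp⟩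
      · simp [hpq]
      · have hSeq : ({p, q} : Finset Pt) = S := by
          apply Finset.eq_of_subset_of_card_le hsub
          rw [Finset.card_pair hpq, h2]
        rw [← hSeq]
        simp
      · exact List.pairwise_singleton _ _
    have h3 : 3 ≤ S.card := by omega
    rcases Classical.em (p ∈ convexHull ℝ ((S.erase p : Finset Pt) : Set Pt)) with hpe | hpe
    · rcases Classical.em (q ∈ convexHull ℝ ((S.erase q : Finset Pt) : Set Pt)) with hqe | hqe
      · -- INTERIOR CASE
        have htri : ∀ s ∈ S, s ≠ p → s ≠ q → sign3 p q s ≠ 0 := fun s hs h1 h2 =>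
          gp_sign3 hgp hp hq hs hpq (Ne.symm h1) (Ne.symm h2)
        have hAex := side_nonempty hgp hp hq hpq hpe
        have hBex : ∃ s ∈ S, s ≠ p ∧ s ≠ q ∧ sign3 p q s < 0 := by
          obtain ⟨s, hsS, hsq, hsp, hpos⟩ := side_nonempty hgp hq hp (Ne.symm hpq) hqe
          refine ⟨s, hsS, hsp, hsq, ?_⟩
          have := sign3_swap p q s
          linarith
        obtain ⟨a, haS, b, hbS, hγa, hγb, hside⟩ := hull_edge hgp hp hq hpq hAex htri hqe
        have hγp : sign3 p q p = 0 := sign3_self₁ p q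
        have hγq : sign3 p q q = 0 := sign3_self₂ p q
        have hap : a ≠ p := fun h => by rw [h, hγp] at hγa; exact lt_irrefl 0 hγa
        have haq : a ≠ q := fun h => by rw [h, hγq] at hγa; exact lt_irrefl 0 hγa
        have hbp : b ≠ p := fun h => by rw [h, hγp] at hγb; exact lt_irrefl 0 hγb
        have hbq : b ≠ q := fun h => by rw [h, hγq] at hγb; exact lt_irrefl 0 hγb
        have habne : a ≠ b := fun h => by rw [h] at hγa; linarith
        set A := S.filter (fun s => 0 < sign3 p q s) with hA
        set B := S.filter (fun s => sign3 p q s < 0) with hB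
        set TA := insert p A with hTA
        set TB := insert q B with hTB
        have hmemTA : ∀ s, s ∈ TA ↔ s = p ∨ (s ∈ S ∧ 0 < sign3 p q s) := by
          intro s; simp [hTA, hA, Finset.mem_insert, Finset.mem_filter]
        have hmemTB : ∀ s, s ∈ TB ↔ s = q ∨ (s ∈ S ∧ sign3 p q s < 0) := by
          intro s; simp [hTB, hB, Finset.mem_insert, Finset.mem_filter]
        have hTAsub : TA ⊆ S := by
          intro x hx
          rcases (hmemTA x).mp hx with rfl | ⟨h, _⟩
          · exact hp
          · exact h
        have hTBsub : TB ⊆ S := by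
          intro x hx
          rcases (hmemTB x).mp hx with rfl | ⟨h, _⟩
          · exact hq
          · exact h
        have haTA : a ∈ TA := (hmemTA a).mpr (Or.inr ⟨haS, hγa⟩)
        have hpTA : p ∈ TA := (hmemTA p).mpr (Or.inl rfl)
        have hbTB : b ∈ TB := (hmemTB b).mpr (Or.inr ⟨hbS, hγb⟩)
        have hqTB : q ∈ TB := (hmemTB q).mpr (Or.inl rfl)
        have hqTA : q ∉ TA := by
          rw [hmemTA]
          rintro (h | ⟨_, h⟩)
          · exact hpq (h.symm)
          · rw [hγq] at h; exact lt_irrefl 0 h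
        have hbTA : b ∉ TA := by
          rw [hmemTA]
          rintro (h | ⟨_, h⟩)
          · exact hbp h
          · linarith
        have hpTB : p ∉ TB := by
          rw [hmemTB]
          rintro (h | ⟨_, h⟩)
          · exact hpq h
          · rw [hγp] at h; exact lt_irrefl 0 h
        have haTB : a ∉ TB := by
          rw [hmemTB]
          rintro (h | ⟨_, h⟩)
          · exact haq h
          · linarith
        have hdisj : ∀ x, x ∈ TA → x ∈ TB → False := by
          intro x h1 h2
          rcases (hmemTA x).mp h1 with rfl | ⟨_, hx1⟩
          · exact hpTB h2
          · rcases (hmemTB x).mp h2 with rfl | ⟨_, hx2⟩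
            · rw [hγq] at hx1; exact lt_irrefl 0 hx1
            · linarith
        have hunion : ∀ s ∈ S, s ∈ TA ∨ s ∈ TB := by
          intro s hs
          by_cases h1 : s = p
          · exact Or.inl ((hmemTA s).mpr (Or.inl h1))
          by_cases hq1 : s = q
          · exact Or.inr ((hmemTB s).mpr (Or.inl hq1))
          rcases lt_or_gt_of_ne (htri s hs h1 hq1) with h | h
          · exact Or.inr ((hmemTB s).mpr (Or.inr ⟨hs, h⟩))
          · exact Or.inl ((hmemTA s).mpr (Or.inr ⟨hs, h⟩))
        have hbe : b ∈ S.erase q := Finset.mem_erase.mpr ⟨hbq, hbS⟩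
        have hae : a ∈ S.erase p := Finset.mem_erase.mpr ⟨hap, haS⟩
        have hTAcard : TA.card ≤ n := by
          have hsub : TA ⊆ (S.erase q).erase b := by
            intro x hx
            refine Finset.mem_erase.mpr ⟨fun h => hbTA (h ▸ hx), Finset.mem_erase.mpr
              ⟨fun h => hqTA (h ▸ hx), hTAsub hx⟩⟩
          have h4 := Finset.card_le_card hsub
          rw [Finset.card_erase_of_mem hbe, Finset.card_erase_of_mem hq] at h4
          omega
        have hTBcard : TB.card ≤ n := by
          have hsub : TB ⊆ (S.erase p).erase a := by
            intro x hx
            refine Finset.mem_erase.mpr ⟨fun h => haTB (h ▸ hx), Finset.mem_erase.mpr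
              ⟨fun h => hpTB (h ▸ hx), hTBsub hx⟩⟩
          have h4 := Finset.card_le_card hsub
          rw [Finset.card_erase_of_mem hae, Finset.card_erase_of_mem hp] at h4
          omega
        have hTAcard2 : 2 ≤ TA.card := by
          have hsub : ({p, a} : Finset Pt) ⊆ TA := by
            intro x hx
            rcases Finset.mem_insert.mp hx with rfl | hx
            · exact hpTA
            · rw [Finset.mem_singleton.mp hx]; exact haTA
          have h4 := Finset.card_le_card hsub
          rwa [Finset.card_pair (Ne.symm hap)] at h4
        have hTBcard2 : 2 ≤ TB.card := by
          have hsub : ({b, q} : Finset Pt) ⊆ TB := by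
            intro x hx
            rcases Finset.mem_insert.mp hx with rfl | hx
            · exact hbTB
            · rw [Finset.mem_singleton.mp hx]; exact hqTB
          have h4 := Finset.card_le_card hsub
          rwa [Finset.card_pair hbq] at h4
        obtain ⟨PA, ⟨hAnd, hAfin, hAnc⟩, hAh, hAl⟩ :=
          ih TA hTAcard (genpos_mono hgp hTAsub) hTAcard2 p a hpTA haTA (Ne.symm hap)
        obtain ⟨PB, ⟨hBnd, hBfin, hBnc⟩, hBh, hBl⟩ :=
          ih TB hTBcard (genpos_mono hgp hTBsub) hTBcard2 b q hbTB hqTB hbq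
        obtain ⟨PA', rfl⟩ := head?_decomp hAh
        have hPAne : (p :: PA') ≠ [] := by simp
        have hPBne : PB ≠ [] := by
          intro h; rw [h] at hBh; simp at hBh
        have hlastA : (p :: PA').getLast hPAne = a := by
          have := List.getLast?_eq_getLast_of_ne_nil hPAne
          rw [hAl] at this
          exact (Option.some_inj.mp this).symm
        have hheadB : PB.head hPBne = b := by
          have := List.head?_eq_head hPBne
          rw [hBh] at this
          exact (Option.some_inj.mp this).symm
        -- side conditions
        have hTAside : ∀ u, u ∈ TA → sign3 a b u ≤ 0 ∧ (u ≠ a → sign3 a b u < 0) := by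
          intro u hu
          by_cases h : u = a
          · exact ⟨le_of_eq (by rw [h]; exact sign3_self₁ a b), fun hc => absurd h hc⟩
          · have hub : u ≠ b := fun hh => hbTA (hh ▸ hu)
            have := hside u (hTAsub hu) h hub
            exact ⟨le_of_lt this, fun _ => this⟩
        have hTBside : ∀ u, u ∈ TB → sign3 a b u ≤ 0 ∧ (u ≠ b → sign3 a b u < 0) := by
          intro u hu
          by_cases h : u = b
          · exact ⟨le_of_eq (by rw [h]; exact sign3_self₂ a b), fun hc => absurd h hc⟩
          · have hua : u ≠ a := fun hh => haTB (hh ▸ hu)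
            have := hside u (hTBsub hu) hua h
            exact ⟨le_of_lt this, fun _ => this⟩
        have hTAγ : ∀ u, u ∈ TA → 0 ≤ sign3 p q u ∧ (u ≠ p → 0 < sign3 p q u) := by
          intro u hu
          rcases (hmemTA u).mp hu with rfl | ⟨_, h⟩
          · rw [hγp]; exact ⟨le_refl 0, fun hc => absurd rfl hc⟩
          · exact ⟨le_of_lt h, fun _ => h⟩
        have hTBγ : ∀ u, u ∈ TB → sign3 p q u ≤ 0 ∧ (u ≠ q → sign3 p q u < 0) := by
          intro u hu
          rcases (hmemTB u).mp hu with rfl | ⟨_, h⟩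
          · rw [hγq]; exact ⟨le_refl 0, fun hc => absurd rfl hc⟩
          · exact ⟨le_of_lt h, fun _ => h⟩
        have hmemA : ∀ {e : Pt × Pt}, e ∈ pathEdges (p :: PA') → e.1 ∈ TA ∧ e.2 ∈ TA ∧ e.1 ≠ e.2 := by
          intro e he
          exact ⟨by rw [← hAfin]; exact List.mem_toFinset.mpr (pathEdges_mem_fst he),
            by rw [← hAfin]; exact List.mem_toFinset.mpr (pathEdges_mem_snd he),
            pathEdges_ne hAnd he⟩
        have hmemB : ∀ {e : Pt × Pt}, e ∈ pathEdges PB → e.1 ∈ TB ∧ e.2 ∈ TB ∧ e.1 ≠ e.2 := by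
          intro e he
          exact ⟨by rw [← hBfin]; exact List.mem_toFinset.mpr (pathEdges_mem_fst he),
            by rw [← hBfin]; exact List.mem_toFinset.mpr (pathEdges_mem_snd he),
            pathEdges_ne hBnd he⟩
        refine ⟨(p :: PA') ++ PB, ⟨?_, ?_, ?_⟩, by simp, ?_⟩
        · refine List.nodup_append'.mpr ⟨hAnd, hBnd, fun x hx hx' => ?_⟩
          exact hdisj x (by rw [← hAfin]; exact List.mem_toFinset.mpr hx)
            (by rw [← hBfin]; exact List.mem_toFinset.mpr hx')
        · rw [List.toFinset_append, hAfin, hBfin]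
          apply Finset.ext
          intro s
          simp only [Finset.mem_union]
          constructor
          · rintro (h | h)
            · exact hTAsub h
            · exact hTBsub h
          · exact hunion s
        · unfold NonCrossing
          rw [pathEdges_append _ PB hPAne hPBne, hlastA, hheadB, List.pairwise_append]
          refine ⟨hAnc, ?_, ?_⟩
          · rw [List.pairwise_cons]
            refine ⟨fun f hf => ?_, hBnc⟩
            obtain ⟨hf1, hf2, hf12⟩ := hmemB hf
            rw [Set.inter_comm]
            refine disj_of_neg (hTBside f.1 hf1).1 (hTBside f.2 hf2).1 ?_
            by_cases h : f.1 = b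
            · exact Or.inr ((hTBside f.2 hf2).2 (fun hh => hf12 (by rw [h, hh])))
            · exact Or.inl ((hTBside f.1 hf1).2 h)
          · intro e he f hf
            obtain ⟨he1, he2, he12⟩ := hmemA he
            rcases List.mem_cons.mp hf with rfl | hf
            · refine disj_of_neg (hTAside e.1 he1).1 (hTAside e.2 he2).1 ?_
              by_cases h : e.1 = a
              · exact Or.inr ((hTAside e.2 he2).2 (fun hh => he12 (by rw [h, hh])))
              · exact Or.inl ((hTAside e.1 he1).2 h)
            · obtain ⟨hf1, hf2, hf12⟩ := hmemB hf
              refine disj_opp (w := p) (z := q) (hTAγ e.1 he1).1 (hTAγ e.2 he2).1 ?_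
                (hTBγ f.1 hf1).1 (hTBγ f.2 hf2).1 ?_
              · by_cases h : e.1 = p
                · exact Or.inr ((hTAγ e.2 he2).2 (fun hh => he12 (by rw [h, hh])))
                · exact Or.inl ((hTAγ e.1 he1).2 h)
              · by_cases h : f.1 = q
                · exact Or.inr ((hTBγ f.2 hf2).2 (fun hh => hf12 (by rw [h, hh])))
                · exact Or.inl ((hTBγ f.1 hf1).2 h)
        · rw [List.getLast?_append_of_ne_nil _ hPBne]
          exact hBl
      · -- EXTREME q CASE
        have hcq : (S.erase q).card = S.card - 1 := Finset.card_erase_of_mem hq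
        have hneQ : (S.erase q).Nonempty := Finset.card_pos.mp (by omega)
        obtain ⟨⟨a1, ha1, hside1⟩, ⟨a2, ha2, hside2⟩⟩ := tangent hgp hq hqe hneQ
        have ha12 : a1 ≠ a2 := by
          intro h12
          have hpos : 0 < ((S.erase q).erase a1).card := by
            rw [Finset.card_erase_of_mem ha1, hcq]; omega
          obtain ⟨s, hs⟩ := Finset.card_pos.mp hpos
          obtain ⟨hsa1, hsep⟩ := Finset.mem_erase.mp hs
          obtain ⟨hsq, hsS⟩ := Finset.mem_erase.mp hsep
          have hh1 := hside1 s hsS hsq hsa1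
          have hh2 := hside2 s hsS hsq (by rw [← h12]; exact hsa1)
          rw [← h12] at hh2
          linarith
        obtain ⟨t, htep, htp, hside⟩ : ∃ t, t ∈ S.erase q ∧ t ≠ p ∧
            ((∀ s ∈ S, s ≠ q → s ≠ t → 0 < sign3 q t s) ∨
             (∀ s ∈ S, s ≠ q → s ≠ t → sign3 q t s < 0)) := by
          by_cases h : a1 = p
          · exact ⟨a2, ha2, fun hh => ha12 (by rw [h, hh]), Or.inr hside2⟩
          · exact ⟨a1, ha1, h, Or.inl hside1⟩
        obtain ⟨htq, htS⟩ := Finset.mem_erase.mp htep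
        have hgp' := genpos_mono hgp (Finset.erase_subset q S)
        obtain ⟨P, ⟨hPnd, hPfin, hPnc⟩, hPh, hPl⟩ := ih (S.erase q) (by omega) hgp'
          (by omega) p t (Finset.mem_erase.mpr ⟨hpq, hp⟩) htep (Ne.symm htp)
        obtain ⟨P', rfl⟩ := getLast?_decomp hPl
        have hPne : (P' ++ [t]) ≠ [] := by simp
        have hmemP : ∀ {e : Pt × Pt}, e ∈ pathEdges (P' ++ [t]) →
            e.1 ∈ S.erase q ∧ e.2 ∈ S.erase q ∧ e.1 ≠ e.2 := by
          intro e he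
          exact ⟨by rw [← hPfin]; exact List.mem_toFinset.mpr (pathEdges_mem_fst he),
            by rw [← hPfin]; exact List.mem_toFinset.mpr (pathEdges_mem_snd he),
            pathEdges_ne hPnd he⟩
        refine ⟨(P' ++ [t]) ++ [q], ⟨?_, ?_, ?_⟩, ?_, by simp⟩
        · refine List.nodup_append'.mpr ⟨hPnd, by simp, fun x hx hx' => ?_⟩
          have hxq : x = q := by simpa using hx'
          subst hxq
          have : x ∈ S.erase x := by rw [← hPfin]; exact List.mem_toFinset.mpr hx
          exact (Finset.mem_erase.mp this).1 rfl
        · rw [List.toFinset_append, hPfin]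
          have : ([q] : List Pt).toFinset = {q} := by simp
          rw [this, Finset.union_comm, ← Finset.insert_eq]
          exact Finset.insert_erase hq
        · unfold NonCrossing
          rw [pathEdges_append _ [q] hPne (by simp), pathEdges_single, List.pairwise_append]
          have hlastP : (P' ++ [t]).getLast hPne = t := by
            have h0 := List.getLast?_eq_getLast_of_ne_nil hPne
            rw [hPl] at h0
            exact (Option.some_inj.mp h0).symm
          rw [hlastP]
          refine ⟨hPnc, List.pairwise_singleton _ _, fun e he f hf => ?_⟩
          have hf' : f = (t, q) := by simpa using hf
          subst hf'
          obtain ⟨he1, he2, he12⟩ := hmemP he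
          obtain ⟨he1q, he1S⟩ := Finset.mem_erase.mp he1
          obtain ⟨he2q, he2S⟩ := Finset.mem_erase.mp he2
          show openSegment ℝ e.1 e.2 ∩ openSegment ℝ t q = ∅
          rw [openSegment_symm ℝ t q]
          rcases hside with hs | hs
          · refine disj_of_pos (w := q) (z := t) ?_ ?_ ?_
            · by_cases h : e.1 = t
              · simp [h, sign3_self₂]
              · exact le_of_lt (hs e.1 he1S he1q h)
            · by_cases h : e.2 = t
              · simp [h, sign3_self₂]
              · exact le_of_lt (hs e.2 he2S he2q h)
            · by_cases h : e.1 = t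
              · exact Or.inr (hs e.2 he2S he2q (fun hh => he12 (by rw [h, hh])))
              · exact Or.inl (hs e.1 he1S he1q h)
          · refine disj_of_neg (w := q) (z := t) ?_ ?_ ?_
            · by_cases h : e.1 = t
              · simp [h, sign3_self₂]
              · exact le_of_lt (hs e.1 he1S he1q h)
            · by_cases h : e.2 = t
              · simp [h, sign3_self₂]
              · exact le_of_lt (hs e.2 he2S he2q h)
            · by_cases h : e.1 = t
              · exact Or.inr (hs e.2 he2S he2q (fun hh => he12 (by rw [h, hh])))
              · exact Or.inl (hs e.1 he1S he1q h)
        · rw [List.head?_append_of_ne_nil _ hPne]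
          exact hPh
    · -- EXTREME p CASE
      have hcp : (S.erase p).card = S.card - 1 := Finset.card_erase_of_mem hp
      have hneP : (S.erase p).Nonempty := Finset.card_pos.mp (by omega)
      obtain ⟨⟨a1, ha1, hside1⟩, ⟨a2, ha2, hside2⟩⟩ := tangent hgp hp hpe hneP
      have ha12 : a1 ≠ a2 := by
        intro h12
        have hpos : 0 < ((S.erase p).erase a1).card := by
          rw [Finset.card_erase_of_mem ha1, hcp]; omega
        obtain ⟨s, hs⟩ := Finset.card_pos.mp hpos
        obtain ⟨hsa1, hsep⟩ := Finset.mem_erase.mp hs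
        obtain ⟨hsp, hsS⟩ := Finset.mem_erase.mp hsep
        have hh1 := hside1 s hsS hsp hsa1
        have hh2 := hside2 s hsS hsp (by rw [← h12]; exact hsa1)
        rw [← h12] at hh2
        linarith
      obtain ⟨t, htep, htq, hside⟩ : ∃ t, t ∈ S.erase p ∧ t ≠ q ∧
          ((∀ s ∈ S, s ≠ p → s ≠ t → 0 < sign3 p t s) ∨
           (∀ s ∈ S, s ≠ p → s ≠ t → sign3 p t s < 0)) := by
        by_cases h : a1 = q
        · exact ⟨a2, ha2, fun hh => ha12 (by rw [h, hh]), Or.inr hside2⟩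
        · exact ⟨a1, ha1, h, Or.inl hside1⟩
      obtain ⟨htp, htS⟩ := Finset.mem_erase.mp htep
      have hgp' := genpos_mono hgp (Finset.erase_subset p S)
      obtain ⟨P, ⟨hPnd, hPfin, hPnc⟩, hPh, hPl⟩ := ih (S.erase p) (by omega) hgp'
        (by omega) t q htep (Finset.mem_erase.mpr ⟨Ne.symm hpq, hq⟩) htq
      obtain ⟨P', rfl⟩ := head?_decomp hPh
      refine ⟨p :: t :: P', ⟨?_, ?_, ?_⟩, rfl, ?_⟩
      · rw [List.nodup_cons]
        refine ⟨fun hmem => ?_, hPnd⟩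
        have : p ∈ S.erase p := by rw [← hPfin]; exact List.mem_toFinset.mpr hmem
        exact (Finset.mem_erase.mp this).1 rfl
      · rw [show (p :: t :: P').toFinset = insert p ((t :: P').toFinset) from by simp, hPfin]
        exact Finset.insert_erase hp
      · unfold NonCrossing
        rw [pathEdges_cons₂, List.pairwise_cons]
        refine ⟨fun e he => ?_, hPnc⟩
        have hu : e.1 ∈ S.erase p := by
          rw [← hPfin]; exact List.mem_toFinset.mpr (pathEdges_mem_fst he)
        have hv : e.2 ∈ S.erase p := by
          rw [← hPfin]; exact List.mem_toFinset.mpr (pathEdges_mem_snd he)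
        have huv := pathEdges_ne hPnd he
        obtain ⟨hup, huS⟩ := Finset.mem_erase.mp hu
        obtain ⟨hvp, hvS⟩ := Finset.mem_erase.mp hv
        rw [Set.inter_comm]
        rcases hside with hs | hs
        · refine disj_of_pos (w := p) (z := t) ?_ ?_ ?_
          · by_cases h : e.1 = t
            · simp [h, sign3_self₂]
            · exact le_of_lt (hs e.1 huS hup h)
          · by_cases h : e.2 = t
            · simp [h, sign3_self₂]
            · exact le_of_lt (hs e.2 hvS hvp h)
          · by_cases h : e.1 = t
            · exact Or.inr (hs e.2 hvS hvp (fun hh => huv (by rw [h, hh])))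
            · exact Or.inl (hs e.1 huS hup h)
        · refine disj_of_neg (w := p) (z := t) ?_ ?_ ?_
          · by_cases h : e.1 = t
            · simp [h, sign3_self₂]
            · exact le_of_lt (hs e.1 huS hup h)
          · by_cases h : e.2 = t
            · simp [h, sign3_self₂]
            · exact le_of_lt (hs e.2 hvS hvp h)
          · by_cases h : e.1 = t
            · exact Or.inr (hs e.2 hvS hvp (fun hh => huv (by rw [h, hh])))
            · exact Or.inl (hs e.1 huS hup h)
      · rw [show (p :: t :: P') = [p] ++ (t :: P') from rfl,
          List.getLast?_append_of_ne_nil _ (by simp)]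
        exact hPl

/-- For any two distinct points `p, q` of a point set `S` in general position,
there is a plane straight-line spanning path of `S` with endpoints `p` and `q`. -/
theorem stmt_0 (S : Finset Pt) (hgp : GenPos S) (hcard : 2 ≤ S.card)
    (p q : Pt) (hp : p ∈ S) (hq : q ∈ S) (hpq : p ≠ q) :
    ∃ l : List Pt, IsPlanePath S l ∧ l.head? = some p ∧ l.getLast? = some q :=
  path_exists_aux S.card S (le_refl _) hgp hcard p q hp hq hpq
end
end

section
/- Let S be a finite planar point set in general position and let p be a point of S lying strictly in the interior of the convex hull of S. Order the points of S \ {p} radially around p. Then the path that starts at p, goes to the second point in this radial order, and then visits the remaining points consecutively in radial order (ending at the first point of the order) is a plane spanning path of S. -/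
open scoped Classical

noncomputable section

/-- View a planar point as a complex number. -/
def toC (a : Pt) : ℂ := ⟨a.1, a.2⟩

/-- The counterclockwise angle of `x` around `p`, measured from the
direction of `h`, normalized to lie in `[0, 2π)`. -/
def angFrom (p h x : Pt) : ℝ :=
  if Complex.arg ((toC x - toC p) / (toC h - toC p)) < 0 then
    Complex.arg ((toC x - toC p) / (toC h - toC p)) + 2 * Real.pi
  else
    Complex.arg ((toC x - toC p) / (toC h - toC p))

/-!
Measure angles around `p` from the first point `l[0]`, so that the points of `l` have increasing
angles `θ 0 = 0 < θ 1 < ⋯ < θ (n-1) < θ n := 2π`. Since `p` is interior, every open half-plane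
bounded by a line through `p` meets `S`, so cyclically consecutive points are less than a
half-turn apart. Hence the open edge from `l[k]` to `l[k+1]` (and from `l[n-1]` back to `l[0]`)
lies strictly inside the sector of angles `(θ k, θ (k+1))`, while the first edge `p l[1]` lies on
the ray of angle `θ 1`. These angular ranges are disjoint, so no two edges cross.
-/

open Real Set Filter Topology

@[simp]
lemma length_pathEdges (l : List Pt) : (pathEdges l).length = l.length - 1 := by
  simp [pathEdges]

lemma getElem_pathEdges {l : List Pt} {k : ℕ} (hk : k < (pathEdges l).length) :
    (pathEdges l)[k] = (l[k]'(by simp at hk; omega), l[k + 1]'(by simp at hk; omega)) := by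
  simp [pathEdges]

lemma nonCrossing_of_mapsTo_Ioc {E : List (Pt × Pt)} (f : Pt → ℝ) {θ : ℕ → ℝ} (hθ : Monotone θ)
    (hE : ∀ k (hk : k < E.length),
      MapsTo f (openSegment ℝ E[k].1 E[k].2) (Ioc (θ k) (θ (k + 1)))) :
    NonCrossing E := by
  refine List.pairwise_iff_getElem.2 fun i j hi hj hij => eq_empty_iff_forall_notMem.2 ?_
  rintro y ⟨hyi, hyj⟩
  linarith [(hE i hi hyi).2, (hE j hj hyj).1, hθ (Nat.succ_le_of_lt hij)]

lemma toC_injective : Function.Injective toC := fun a b h => by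
  simp only [toC, Complex.mk.injEq] at h
  exact Prod.ext h.1 h.2

lemma toC_sub_ne_zero {a b : Pt} (h : a ≠ b) : toC a - toC b ≠ 0 :=
  sub_ne_zero.2 (toC_injective.ne h)

lemma sign3_self (p a : Pt) : sign3 p a a = 0 := by
  unfold sign3; ring

lemma sign3_base_right (p a : Pt) : sign3 p a p = 0 := by
  unfold sign3; ring

lemma sign3_swap_s1 (p a b : Pt) : sign3 p b a = -sign3 p a b := by
  unfold sign3; ring

lemma sign3_add_smul {s t : ℝ} (hst : s + t = 1) (p a x y : Pt) :
    sign3 p a (s • x + t • y) = s * sign3 p a x + t * sign3 p a y := by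
  simp only [sign3, Prod.fst_add, Prod.snd_add, Prod.smul_fst, Prod.smul_snd, smul_eq_mul]
  linear_combination (a.1 * p.2 - a.2 * p.1) * hst

lemma convex_setOf_sign3_nonneg (p a : Pt) : Convex ℝ {x | 0 ≤ sign3 p a x} := by
  intro x hx y hy s t hs ht hst
  simp only [mem_ofPred_eq, sign3_add_smul hst] at hx hy ⊢
  exact add_nonneg (mul_nonneg hs hx) (mul_nonneg ht hy)

/- Otherwise `t ↦ sign3 p b (p + t • v)`, for `v` orthogonal to `b - p`, would be a linear
function with nonzero slope and a local minimum at `0`. -/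
lemma exists_sign3_neg_of_mem_interior {S : Set Pt} {p b : Pt}
    (hp : p ∈ interior (convexHull ℝ S)) (hb : b ≠ p) : ∃ x ∈ S, sign3 p b x < 0 := by
  by_contra! hS
  set c := (b.1 - p.1) ^ 2 + (b.2 - p.2) ^ 2
  have hline : (fun t : ℝ => sign3 p b (p + t • (p.2 - b.2, b.1 - p.1))) = fun t => t * c := by
    funext t
    simp only [sign3, c, Prod.fst_add, Prod.snd_add, Prod.smul_fst, Prod.smul_snd, smul_eq_mul]
    ring
  have hhalf : {x | 0 ≤ sign3 p b x} ∈ 𝓝 p := mem_interior_iff_mem_nhds.1 <|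
    interior_mono (convexHull_min hS (convex_setOf_sign3_nonneg p b)) hp
  have hto : Tendsto (fun t : ℝ => p + t • ((p.2 - b.2, b.1 - p.1) : Pt)) (𝓝 0) (𝓝 p) := by
    have : Continuous (fun t : ℝ => p + t • ((p.2 - b.2, b.1 - p.1) : Pt)) := by fun_prop
    simpa using this.tendsto 0
  have hmin : IsLocalMin (fun t : ℝ => t * c) 0 := by
    rw [← hline]
    filter_upwards [hto hhalf] with t ht
    simpa [sign3_base_right] using ht
  have hc : c = 0 := hmin.hasDerivAt_eq_zero (by simpa using (hasDerivAt_id (0 : ℝ)).mul_const c)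
  apply hb
  simp only [c] at hc
  have h1 : b.1 - p.1 = 0 := by nlinarith [sq_nonneg (b.1 - p.1), sq_nonneg (b.2 - p.2)]
  have h2 : b.2 - p.2 = 0 := by nlinarith [sq_nonneg (b.1 - p.1), sq_nonneg (b.2 - p.2)]
  exact Prod.ext (by linarith) (by linarith)

lemma angFrom_mem_Ico (p h x : Pt) : angFrom p h x ∈ Ico 0 (2 * π) := by
  have := Complex.arg_mem_Ioc ((toC x - toC p) / (toC h - toC p))
  unfold angFrom
  split_ifs <;> constructor <;> linarith [this.1, this.2, pi_pos]

lemma coe_angFrom (p h x : Pt) :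
    (angFrom p h x : Angle) = ((toC x - toC p) / (toC h - toC p)).arg := by
  unfold angFrom
  split_ifs
  · rw [Angle.coe_add, Angle.coe_two_pi, add_zero]
  · rfl

lemma eq_of_coe_angle_eq {x y : ℝ} (hx : x ∈ Ico 0 (2 * π)) (hy : y ∈ Ico 0 (2 * π))
    (h : (x : Angle) = y) : x = y :=
  have : Fact (0 < 2 * π) := ⟨two_pi_pos⟩
  (AddCircle.coe_eq_coe_iff_of_mem_Ico (a := 0) (by simpa using hx) (by simpa using hy)).1 h

lemma coe_angFrom_eq_sub {p h b x : Pt} (hh : h ≠ p) (hb : b ≠ p) (hx : x ≠ p) :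
    (angFrom p b x : Angle) = angFrom p h x - angFrom p h b := by
  have hh' := toC_sub_ne_zero hh
  have hb' := toC_sub_ne_zero hb
  have hx' := toC_sub_ne_zero hx
  rw [coe_angFrom, coe_angFrom, coe_angFrom, ← Complex.arg_div_coe_angle (div_ne_zero hx' hh')
    (div_ne_zero hb' hh'), div_div_div_cancel_right₀ hh']

lemma im_div_eq_sign3_div (p a b : Pt) :
    ((toC b - toC p) / (toC a - toC p)).im = sign3 p a b / Complex.normSq (toC a - toC p) := by
  simp only [Complex.div_im, toC, sign3, Complex.sub_re, Complex.sub_im]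
  ring

lemma angFrom_mem_Ioo_iff {p a b : Pt} (ha : a ≠ p) :
    angFrom p a b ∈ Ioo 0 π ↔ 0 < sign3 p a b := by
  have hn := Complex.normSq_pos.2 (toC_sub_ne_zero ha)
  set z := (toC b - toC p) / (toC a - toC p) with hz
  have hsign : 0 < sign3 p a b ↔ 0 < z.im := by
    rw [hz, im_div_eq_sign3_div, div_pos_iff_of_pos_right hn]
  rw [hsign]
  unfold angFrom
  rw [← hz]
  split_ifs with hneg
  · have := Complex.neg_pi_lt_arg z
    simp only [mem_Ioo, Complex.arg_neg_iff.1 hneg |>.le |> not_lt.2, iff_false]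
    intro h; linarith [h.2]
  · have h0 : 0 ≤ z.arg := not_lt.1 hneg
    constructor
    · rintro ⟨hpos, hlt⟩
      refine lt_of_le_of_ne (Complex.arg_nonneg_iff.1 h0) fun him => hpos.ne' ?_
      exact Complex.arg_eq_zero_iff.2
        ⟨(Complex.arg_lt_pi_iff.1 hlt).resolve_right (not_not.2 him.symm), him.symm⟩
    · intro him
      exact ⟨lt_of_le_of_ne h0 fun h => him.ne' (Complex.arg_eq_zero_iff.1 h.symm).2,
        Complex.arg_lt_pi_iff.2 (Or.inr him.ne')⟩

lemma pi_lt_angFrom_iff {p a b : Pt} (ha : a ≠ p) : π < angFrom p a b ↔ sign3 p a b < 0 := by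
  have hn := Complex.normSq_pos.2 (toC_sub_ne_zero ha)
  set z := (toC b - toC p) / (toC a - toC p) with hz
  have hsign : sign3 p a b < 0 ↔ z.im < 0 := by
    rw [hz, im_div_eq_sign3_div, div_lt_iff₀ hn, zero_mul]
  rw [hsign, ← Complex.arg_neg_iff]
  unfold angFrom
  rw [← hz]
  split_ifs with hneg
  · simp only [hneg, iff_true]; linarith [Complex.neg_pi_lt_arg z]
  · simp only [hneg, iff_false, not_lt]; exact Complex.arg_le_pi z

lemma angFrom_eq_of_mem_openSegment {p h b y : Pt} (hy : y ∈ openSegment ℝ p b) :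
    angFrom p h y = angFrom p h b := by
  obtain ⟨s, t, -, ht, hst, rfl⟩ := hy
  have hray : toC (s • p + t • b) - toC p = t * (toC b - toC p) := by
    apply Complex.ext <;>
      simp only [toC, Complex.sub_re, Complex.sub_im, Complex.mul_re, Complex.mul_im,
        Complex.ofReal_re, Complex.ofReal_im, Prod.fst_add, Prod.snd_add, Prod.smul_fst,
        Prod.smul_snd, smul_eq_mul]
    · linear_combination p.1 * hst
    · linear_combination p.2 * hst
  simp only [angFrom, hray, mul_div_assoc, Complex.arg_real_mul _ ht]

/-- `β` is the angle of `b` lifted above that of `a`: it is `angFrom p h b + 2π` when the edge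
`ab` crosses the reference ray from `p` through `h`. -/
lemma angFrom_mem_Ioo_of_mem_openSegment {p h a b y : Pt} {β : ℝ} (hh : h ≠ p) (ha : a ≠ p)
    (hb : b ≠ p) (hβ : (β : Angle) = angFrom p h b) (hlt : angFrom p h a < β)
    (hβ_le : β ≤ 2 * π) (hgap : β - angFrom p h a < π) (hy : y ∈ openSegment ℝ a b) :
    angFrom p h y ∈ Ioo (angFrom p h a) β := by
  obtain ⟨s, t, hs, ht, hst, rfl⟩ := hy
  set y := s • a + t • b
  have hAa := angFrom_mem_Ico p h a
  have hab : angFrom p a b = β - angFrom p h a :=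
    eq_of_coe_angle_eq (angFrom_mem_Ico p a b) ⟨by linarith, by linarith [hAa.1]⟩
      (by rw [coe_angFrom_eq_sub hh ha hb, Angle.coe_sub, hβ])
  have hab_pos : 0 < sign3 p a b := (angFrom_mem_Ioo_iff ha).1 ⟨by linarith, by linarith⟩
  have hay_pos : 0 < sign3 p a y := by
    rw [sign3_add_smul hst, sign3_self]; positivity
  have hyp : y ≠ p := by
    intro hyp
    rw [hyp, sign3_base_right] at hay_pos
    exact hay_pos.false
  have hyb_pos : 0 < sign3 p y b := by
    rw [sign3_swap_s1, sign3_add_smul hst, sign3_self, sign3_swap_s1]; nlinarith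
  obtain ⟨hay₀, hayπ⟩ := (angFrom_mem_Ioo_iff ha).2 hay_pos
  obtain ⟨hyb₀, hybπ⟩ := (angFrom_mem_Ioo_iff hyp).2 hyb_pos
  have hsum : angFrom p a y + angFrom p y b = angFrom p a b :=
    eq_of_coe_angle_eq ⟨by linarith, by linarith⟩ (angFrom_mem_Ico p a b) (by
      rw [Angle.coe_add, coe_angFrom_eq_sub hh ha hyp, coe_angFrom_eq_sub hh hyp hb,
        coe_angFrom_eq_sub hh ha hb]
      abel)
  have hAy : angFrom p h y = angFrom p h a + angFrom p a y :=
    eq_of_coe_angle_eq (angFrom_mem_Ico p h y) ⟨by linarith [hAa.1], by linarith⟩ (by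
      rw [Angle.coe_add, coe_angFrom_eq_sub hh ha hyp]
      abel)
  rw [hAy]
  constructor <;> linarith

lemma angFrom_self (p h : Pt) : angFrom p h h = 0 := by
  unfold angFrom
  rcases eq_or_ne (toC h - toC p) 0 with h0 | h0 <;> simp [h0]

/-- The angle of `l[k]` around `p`, measured from `l[0]`, with a full turn at `k = l.length`, so
that the `k`-th edge of the path `p :: l.rotate 1` sweeps the angles in
`Ioc (radialAngle p l k) (radialAngle p l (k + 1))`. -/
def radialAngle (p : Pt) (l : List Pt) (k : ℕ) : ℝ :=
  if hk : k < l.length then angFrom p l.headI l[k] else 2 * π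

section RadialAngle

variable {p : Pt} {l : List Pt}

lemma radialAngle_of_lt {k : ℕ} (hk : k < l.length) :
    radialAngle p l k = angFrom p l.headI l[k] :=
  dif_pos hk

lemma radialAngle_of_le {k : ℕ} (hk : l.length ≤ k) : radialAngle p l k = 2 * π :=
  dif_neg hk.not_gt

lemma radialAngle_zero (hl : 0 < l.length) : radialAngle p l 0 = 0 := by
  obtain ⟨a, l, rfl⟩ := List.exists_cons_of_length_pos hl
  exact (radialAngle_of_lt hl).trans (angFrom_self p a)

lemma radialAngle_mem_Icc (k : ℕ) : radialAngle p l k ∈ Icc 0 (2 * π) := by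
  unfold radialAngle
  split_ifs
  · exact Ico_subset_Icc_self (angFrom_mem_Ico ..)
  · exact ⟨by positivity, le_rfl⟩

lemma radialAngle_lt_radialAngle
    (hsort : l.Pairwise fun a b => angFrom p l.headI a < angFrom p l.headI b) {i j : ℕ}
    (hij : i < j) (hj : j ≤ l.length) :
    radialAngle p l i < radialAngle p l j := by
  rw [radialAngle_of_lt (hij.trans_le hj)]
  rcases hj.lt_or_eq with hj | rfl
  · rw [radialAngle_of_lt hj]
    exact List.pairwise_iff_getElem.1 hsort i j _ hj hij
  · rw [radialAngle_of_le le_rfl]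
    exact (angFrom_mem_Ico ..).2

lemma monotone_radialAngle
    (hsort : l.Pairwise fun a b => angFrom p l.headI a < angFrom p l.headI b) :
    Monotone (radialAngle p l) := by
  intro i j hij
  rcases le_or_gt j l.length with hj | hj
  · rcases hij.lt_or_eq with hij | rfl
    · exact (radialAngle_lt_radialAngle hsort hij hj).le
    · exact le_rfl
  · rw [radialAngle_of_le hj.le]
    exact (radialAngle_mem_Icc i).2

lemma coe_radialAngle_succ {k : ℕ} (hk : k < l.length) :
    (radialAngle p l (k + 1) : Angle) =
      angFrom p l.headI (l[(k + 1) % l.length]'(Nat.mod_lt _ (by omega))) := by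
  rcases (Nat.succ_le_of_lt hk).lt_or_eq with hk' | hk'
  · simp only [radialAngle_of_lt hk', Nat.mod_eq_of_lt hk']
  · obtain ⟨a, t, rfl⟩ := List.exists_cons_of_length_pos (k.succ_pos.trans_eq hk')
    simp [radialAngle_of_le hk'.ge, ← hk', angFrom_self]

lemma ne_of_mem_of_toFinset_eq_erase {S : Finset Pt} (hcov : l.toFinset = S.erase p) {x : Pt}
    (hx : x ∈ l) : x ≠ p :=
  Finset.ne_of_mem_erase (hcov ▸ List.mem_toFinset.2 hx)

/- A gap of at least `π` would leave all of `S` on one side of the line through `p` and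
`l[(k + 1) % l.length]`. -/
lemma radialAngle_succ_sub_lt_pi {S : Finset Pt} (hp : p ∈ interior (convexHull ℝ (S : Set Pt)))
    (hcov : l.toFinset = S.erase p)
    (hsort : l.Pairwise fun a b => angFrom p l.headI a < angFrom p l.headI b)
    {k : ℕ} (hk : k < l.length) : radialAngle p l (k + 1) - radialAngle p l k < π := by
  have hne := fun x => ne_of_mem_of_toFinset_eq_erase (x := x) hcov
  have hh : l.headI ≠ p := by
    obtain ⟨a, t, rfl⟩ := List.exists_cons_of_length_pos (k.zero_le.trans_lt hk)
    exact hne _ List.mem_cons_self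
  set b := l[(k + 1) % l.length]'(Nat.mod_lt _ (by omega))
  have hb : b ≠ p := hne b (List.getElem_mem _)
  obtain ⟨x, hxS, hx⟩ := exists_sign3_neg_of_mem_interior hp hb
  have hxp : x ≠ p := by
    intro hxp
    rw [hxp, sign3_base_right] at hx
    exact hx.false
  obtain ⟨j, hj, rfl⟩ := List.mem_iff_getElem.1
    (List.mem_toFinset.1 (hcov ▸ Finset.mem_erase.2 ⟨hxp, hxS⟩))
  have hcoe : (angFrom p b l[j] : Angle) = (radialAngle p l j - radialAngle p l (k + 1) : ℝ) := by
    rw [coe_angFrom_eq_sub hh hb hxp, Angle.coe_sub, coe_radialAngle_succ hk,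
      radialAngle_of_lt hj]
  have hmono := monotone_radialAngle hsort
  obtain ⟨hθj, -⟩ := radialAngle_mem_Icc (p := p) (l := l) j
  obtain ⟨hθk, -⟩ := radialAngle_mem_Icc (p := p) (l := l) k
  obtain ⟨-, hθk'⟩ := radialAngle_mem_Icc (p := p) (l := l) (k + 1)
  have hθ := radialAngle_lt_radialAngle hsort hj le_rfl
  rw [radialAngle_of_le le_rfl] at hθ
  by_contra! hgap
  refine ((pi_lt_angFrom_iff hb).2 hx).not_ge ?_
  rcases le_or_gt j k with hjk | hkj
  · have := hmono hjk
    rw [eq_of_coe_angle_eq (angFrom_mem_Ico ..)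
      (y := radialAngle p l j - radialAngle p l (k + 1) + 2 * π)
      ⟨by linarith, by linarith⟩ (by rw [hcoe, Angle.coe_add, Angle.coe_two_pi, add_zero])]
    linarith
  · have := hmono (Nat.succ_le_of_lt hkj)
    rw [eq_of_coe_angle_eq (angFrom_mem_Ico ..) ⟨by linarith, by linarith⟩ hcoe]
    linarith

lemma mapsTo_angFrom_pathEdges {S : Finset Pt} (hp : p ∈ interior (convexHull ℝ (S : Set Pt)))
    (hcov : l.toFinset = S.erase p)
    (hsort : l.Pairwise fun a b => angFrom p l.headI a < angFrom p l.headI b)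
    {k : ℕ} (hk : k < (pathEdges (p :: l.rotate 1)).length) :
    MapsTo (angFrom p l.headI) (openSegment ℝ (pathEdges (p :: l.rotate 1))[k].1
      (pathEdges (p :: l.rotate 1))[k].2) (Ioc (radialAngle p l k) (radialAngle p l (k + 1))) := by
  intro y hy
  have hne := fun x => ne_of_mem_of_toFinset_eq_erase (x := x) hcov
  simp only [length_pathEdges, List.length_cons, List.length_rotate, add_tsub_cancel_right] at hk
  have hgap := radialAngle_succ_sub_lt_pi hp hcov hsort hk
  have hlt := radialAngle_lt_radialAngle hsort (Nat.lt_succ_self k) hk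
  rw [getElem_pathEdges] at hy
  rcases k with _ | k
  · have hn : 1 < l.length := by
      by_contra! hn
      rw [radialAngle_of_le hn, radialAngle_zero hk] at hgap
      linarith [pi_pos]
    simp only [List.getElem_cons_zero, List.getElem_cons_succ, List.getElem_rotate,
      Nat.mod_eq_of_lt hn] at hy
    rw [angFrom_eq_of_mem_openSegment hy, ← radialAngle_of_lt hn]
    exact ⟨hlt, le_rfl⟩
  · have hh : l.headI ≠ p := by
      obtain ⟨a, t, rfl⟩ := List.exists_cons_of_length_pos (k.succ_pos.trans hk)
      exact hne _ List.mem_cons_self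
    simp only [List.getElem_cons_succ, List.getElem_rotate, Nat.mod_eq_of_lt hk] at hy
    rw [radialAngle_of_lt hk] at hlt hgap ⊢
    exact Ioo_subset_Ioc_self <| angFrom_mem_Ioo_of_mem_openSegment hh
      (hne _ (List.getElem_mem _)) (hne _ (List.getElem_mem _)) (coe_radialAngle_succ hk)
      hlt (radialAngle_mem_Icc _).2 hgap hy

end RadialAngle

theorem stmt_1_general (S : Finset Pt) (p : Pt) (hp : InteriorPt S p)
    (l : List Pt) (hnd : l.Nodup) (hcov : l.toFinset = S.erase p)
    (hsort : l.Pairwise fun a b => angFrom p l.headI a < angFrom p l.headI b) :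
    IsPlanePath S (p :: l.rotate 1) := by
  obtain ⟨hpS, hp⟩ := hp
  have hpl : p ∉ l.rotate 1 := fun h =>
    ne_of_mem_of_toFinset_eq_erase hcov ((List.rotate_perm l 1).mem_iff.1 h) rfl
  refine ⟨List.nodup_cons.2 ⟨hpl, (List.rotate_perm l 1).nodup_iff.2 hnd⟩, ?_,
    nonCrossing_of_mapsTo_Ioc _ (monotone_radialAngle hsort)
      fun _ => mapsTo_angFrom_pathEdges hp hcov hsort⟩
  rw [List.toFinset_cons, List.toFinset_eq_of_perm _ _ (List.rotate_perm l 1), hcov,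
    Finset.insert_erase hpS]

/-- If `p` is an interior point of `S` and `l` lists `S \ {p}` in radial order
around `p`, then the path starting at `p`, going to the second point of `l`, and
visiting the remaining points in radial order (ending at the first point of `l`)
is a plane spanning path of `S`. -/
theorem stmt_1 (S : Finset Pt) (hgp : GenPos S) (p : Pt) (hp : InteriorPt S p)
    (l : List Pt) (hnd : l.Nodup) (hcov : l.toFinset = S.erase p)
    (hsort : l.Pairwise fun a b => angFrom p l.headI a < angFrom p l.headI b) :
    IsPlanePath S (p :: l.rotate 1) :=
  stmt_1_general S p hp l hnd hcov hsort
end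
end
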